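/- For the energy harvesting two-way channel with infinite batteries: let (p_{k,i}, δ_{k,i}) be a feasible policy and suppose α_1, α_2 ∈ [0,1]. Define δ̃_{k,i} = max{δ_{k,i} − δ_{j,i}, 0} for k = 1,2, j ≠ k. Then (p_{k,i}, δ̃_{k,i}) is a feasible policy, it satisfies δ̃_{1,i}·δ̃_{2,i} = 0 for every i, its sum-throughput equals that of (p_{k,i}, δ_{k,i}), and its battery states S̃_{k,i} = Σ_{n=1}^{i}(E_{k,n} − p_{k,n} + α_j δ̃_{j,n} − δ̃_{k,n}) satisfy S̃_{k,i} ≥ S_{k,i} for all k and i, where S_{k,i} is the corresponding battery state under the original transfers δ. -/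
import Mathlib

lemma term_ineq (a x y : ℝ) (ha0 : 0 ≤ a) (ha1 : a ≤ 1) (hx : 0 ≤ x) (hy : 0 ≤ y) :
    a * y - x ≤ a * max (y - x) 0 - max (x - y) 0 := by
  rcases le_total x y with h | h
  · rw [max_eq_left (by linarith), max_eq_right (by linarith)]
    nlinarith
  · rw [max_eq_right (by linarith), max_eq_left (by linarith)]
    nlinarith

/-- Eliminating simultaneous bi-directional transfers in the
energy harvesting two-way channel with infinite batteries. -/
theorem stmt_0
    (N : ℕ) (E1 E2 p1 p2 d1 d2 : ℕ → ℝ)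
    (h1 h2 s1 s2 a1 a2 : ℝ)
    (hh1 : 0 < h1) (hh2 : 0 < h2) (hs1 : 0 < s1) (hs2 : 0 < s2)
    (ha1 : a1 ∈ Set.Icc (0:ℝ) 1) (ha2 : a2 ∈ Set.Icc (0:ℝ) 1)
    (hE : ∀ i < N, 0 ≤ E1 i ∧ 0 ≤ E2 i)
    (hp : ∀ i < N, 0 ≤ p1 i ∧ 0 ≤ p2 i)
    (hd : ∀ i < N, 0 ≤ d1 i ∧ 0 ≤ d2 i)
    (hfeas : ∀ i < N,
      0 ≤ ∑ n ∈ Finset.range (i+1), (E1 n - p1 n + a2 * d2 n - d1 n) ∧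
      0 ≤ ∑ n ∈ Finset.range (i+1), (E2 n - p2 n + a1 * d1 n - d2 n)) :
    (∀ i < N, 0 ≤ max (d1 i - d2 i) 0 ∧ 0 ≤ max (d2 i - d1 i) 0) ∧
    (∀ i < N,
      0 ≤ ∑ n ∈ Finset.range (i+1),
            (E1 n - p1 n + a2 * max (d2 n - d1 n) 0 - max (d1 n - d2 n) 0) ∧
      0 ≤ ∑ n ∈ Finset.range (i+1),
            (E2 n - p2 n + a1 * max (d1 n - d2 n) 0 - max (d2 n - d1 n) 0)) ∧
    (∀ i < N, max (d1 i - d2 i) 0 * max (d2 i - d1 i) 0 = 0) ∧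
    (∑ i ∈ Finset.range N,
        (1/2 * Real.log (1 + h1 * p1 i / s2) + 1/2 * Real.log (1 + h2 * p2 i / s1))
      = ∑ i ∈ Finset.range N,
        (1/2 * Real.log (1 + h1 * p1 i / s2) + 1/2 * Real.log (1 + h2 * p2 i / s1))) ∧
    (∀ i < N,
      ∑ n ∈ Finset.range (i+1), (E1 n - p1 n + a2 * d2 n - d1 n)
        ≤ ∑ n ∈ Finset.range (i+1),
            (E1 n - p1 n + a2 * max (d2 n - d1 n) 0 - max (d1 n - d2 n) 0) ∧
      ∑ n ∈ Finset.range (i+1), (E2 n - p2 n + a1 * d1 n - d2 n)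
        ≤ ∑ n ∈ Finset.range (i+1),
            (E2 n - p2 n + a1 * max (d1 n - d2 n) 0 - max (d2 n - d1 n) 0)) := by
  obtain ⟨ha10, ha11⟩ := ha1
  obtain ⟨ha20, ha21⟩ := ha2
  have key : ∀ i < N,
      ∑ n ∈ Finset.range (i+1), (E1 n - p1 n + a2 * d2 n - d1 n)
        ≤ ∑ n ∈ Finset.range (i+1),
            (E1 n - p1 n + a2 * max (d2 n - d1 n) 0 - max (d1 n - d2 n) 0) ∧
      ∑ n ∈ Finset.range (i+1), (E2 n - p2 n + a1 * d1 n - d2 n)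
        ≤ ∑ n ∈ Finset.range (i+1),
            (E2 n - p2 n + a1 * max (d1 n - d2 n) 0 - max (d2 n - d1 n) 0) := by
    intro i hi
    constructor <;> apply Finset.sum_le_sum <;> intro n hn <;>
      have hnN : n < N := lt_of_lt_of_le (Finset.mem_range.mp hn) hi <;>
      obtain ⟨hd1, hd2⟩ := hd n hnN
    · have := term_ineq a2 (d1 n) (d2 n) ha20 ha21 hd1 hd2; linarith
    · have := term_ineq a1 (d2 n) (d1 n) ha10 ha11 hd2 hd1; linarith
  refine ⟨fun i _ => ⟨le_max_right _ _, le_max_right _ _⟩, ?_, ?_, rfl, key⟩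
  · intro i hi
    exact ⟨le_trans (hfeas i hi).1 (key i hi).1, le_trans (hfeas i hi).2 (key i hi).2⟩
  · intro i _
    rcases le_total (d1 i) (d2 i) with h | h
    · rw [max_eq_right (by linarith)]; ring
    · rw [max_eq_right (sub_nonpos.mpr h) (a := d2 i - d1 i)]; ring
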